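/- arXiv:1711.00184 — 6 statements merged into one kernel-verified Lean document; each statement's English description precedes it below -/
import Mathlib

section
/- For any positive integer m, the set of positive integers n such that m divides v_n has natural (asymptotic) density one; that is, (1/x)·#{n ≤ x : m divides v_n} tends to 1 as x → ∞. -/
/-!
Fix a prime `p` and write `|·|` for the `p`-adic norm. Since `H n - H ⌊n/p⌋ / p` is the sum of
`1/i` over the `i ≤ n` prime to `p`, it has norm at most `1`; so `|H ⌊n/p⌋| ≥ 1` forces
`|H n| = p |H ⌊n/p⌋|`, and by iteration `p ^ a ∤ v n` forces `|H ⌊n/p^a⌋| < 1`.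
The set of `n` with `|H n| < 1` is closed under `n ↦ ⌊n/p⌋` and contains no two consecutive
integers (their difference `1/(n+1)` has norm at least `1`), so it has at most `((p+1)/2)^k`
elements below `p^k` and hence density zero. Each fibre of `n ↦ ⌊n/p^a⌋` has `p^a` elements,
so the `n` with `p ^ a ∤ v n` have density zero as well, and a union over the prime powers
exactly dividing `m` finishes the proof.
-/

open Finset Filter

theorem Nat.mem_Ico_of_div_eq {n k b : ℕ} (hk : 0 < k) (h : n / k = b) :
    n ∈ Ico (k * b) (k * b + k) := by
  subst h
  have := Nat.div_add_mod n k
  have := Nat.mod_lt n hk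
  rw [mem_Ico]
  constructor <;> omega

theorem Finset.card_le_of_subset_Ico_of_add_one_notMem {s : Finset ℕ} {a l : ℕ}
    (hs : s ⊆ Ico a (a + l)) (h : ∀ n ∈ s, n + 1 ∉ s) : #s ≤ (l + 1) / 2 := by
  have hmaps : ∀ n ∈ s, (n - a) / 2 ∈ range ((l + 1) / 2) := fun n hn => by
    have := mem_Ico.1 (hs hn)
    rw [mem_range]
    omega
  have hinj : Set.InjOn (fun n => (n - a) / 2) s := fun n hn m hm hnm => by
    have := mem_Ico.1 (hs hn)
    have := mem_Ico.1 (hs hm)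
    have : n ≠ m + 1 := fun e => h m hm (e ▸ hn)
    have : m ≠ n + 1 := fun e => h n hn (e ▸ hm)
    simp only at hnm
    omega
  simpa using card_le_card_of_injOn _ hmaps hinj

theorem Nat.tendsto_log_atTop {b : ℕ} (hb : 1 < b) : Tendsto (Nat.log b) atTop atTop :=
  tendsto_atTop_atTop.2 fun k => ⟨b ^ k, fun _ hn => Nat.le_log_of_pow_le hb hn⟩

theorem tendsto_pow_log_div_atTop_nhds_zero {b : ℕ} {c : ℝ} (hb : 1 < b) (hc : 0 ≤ c)
    (hcb : c < b) : Tendsto (fun n : ℕ => c ^ Nat.log b n / n) atTop (nhds 0) := by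
  have hb0 : (0 : ℝ) < b := by exact_mod_cast zero_lt_one.trans hb
  have hgeom : Tendsto (fun n : ℕ => (c / b) ^ Nat.log b n) atTop (nhds 0) :=
    (tendsto_pow_atTop_nhds_zero_of_lt_one (div_nonneg hc hb0.le)
      ((div_lt_one hb0).2 hcb)).comp (Nat.tendsto_log_atTop hb)
  refine squeeze_zero' (Eventually.of_forall fun n => by positivity) ?_ hgeom
  filter_upwards [eventually_ne_atTop 0] with n hn
  rw [div_pow]
  gcongr
  exact_mod_cast Nat.pow_log_le_self b hn

theorem tendsto_natFloor_div_of_tendsto_div {u : ℕ → ℝ} {l : ℝ}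
    (h : Tendsto (fun n : ℕ => u n / n) atTop (nhds l)) :
    Tendsto (fun x : ℝ => u ⌊x⌋₊ / x) atTop (nhds l) := by
  have hlim := (h.comp (tendsto_nat_floor_atTop (α := ℝ))).mul tendsto_nat_floor_div_atTop
  rw [mul_one] at hlim
  refine hlim.congr' ?_
  filter_upwards [eventually_ge_atTop 1] with x hx
  have hfloor : (⌊x⌋₊ : ℝ) ≠ 0 := by exact_mod_cast (Nat.floor_pos.2 hx).ne'
  simp only [Function.comp_apply]
  rw [div_mul_div_cancel₀ hfloor]

theorem tendsto_card_filter_Icc_div_nhds_one {P : ℕ → Prop} [DecidablePred P]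
    (h : Tendsto (fun N : ℕ => (#{n ∈ Icc 1 N | ¬P n} : ℝ) / N) atTop (nhds 0)) :
    Tendsto (fun N : ℕ => (#{n ∈ Icc 1 N | P n} : ℝ) / N) atTop (nhds 1) := by
  have hlim := (tendsto_const_nhds (x := (1 : ℝ))).sub h
  rw [sub_zero] at hlim
  refine hlim.congr' ?_
  filter_upwards [eventually_ne_atTop 0] with N hN
  have hcard : (#{n ∈ Icc 1 N | P n} : ℝ) + #{n ∈ Icc 1 N | ¬P n} = N := by
    exact_mod_cast (card_filter_add_card_filter_not (s := Icc 1 N) P).trans (Nat.card_Icc 1 N)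
  field_simp
  linarith

section Padic

variable {p : ℕ} [hp : Fact p.Prime]

theorem pow_dvd_den_of_pow_le_padicNorm {q : ℚ} {a : ℕ} (h : (p : ℚ) ^ a ≤ padicNorm p q) :
    p ^ a ∣ q.den := by
  have hq : q ≠ 0 := by
    rintro rfl
    rw [padicNorm.zero] at h
    exact (pow_pos (by exact_mod_cast hp.out.pos) a).not_ge h
  rw [padicNorm.eq_zpow_of_nonzero hq, ← zpow_natCast,
    zpow_le_zpow_iff_right₀ (by exact_mod_cast hp.out.one_lt), padicValRat_def] at h
  exact (padicValNat_dvd_iff_le q.den_nz).2 (by omega)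

theorem one_le_padicNorm_inv_natCast_succ (n : ℕ) : 1 ≤ padicNorm p ((n + 1 : ℕ) : ℚ)⁻¹ := by
  have hpos : 0 < padicNorm p ((n + 1 : ℕ) : ℚ) :=
    (padicNorm.nonneg _).lt_of_ne (padicNorm.nonzero (Nat.cast_ne_zero.2 n.succ_ne_zero)).symm
  rw [← one_div, padicNorm.div, padicNorm.one, one_le_div hpos]
  exact padicNorm.of_nat _

theorem one_le_padicNorm_harmonic_succ {n : ℕ} (h : padicNorm p (harmonic n) < 1) :
    1 ≤ padicNorm p (harmonic (n + 1)) := by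
  by_contra! h'
  have hsub := padicNorm.sub (p := p) (q := harmonic (n + 1)) (r := harmonic n)
  rw [harmonic_succ, add_sub_cancel_left] at hsub
  exact (hsub.trans_lt (max_lt (by rwa [← harmonic_succ]) h)).not_ge
    (one_le_padicNorm_inv_natCast_succ n)

theorem padicNorm_harmonic_sub_inv_mul_harmonic_div_le_one (n : ℕ) :
    padicNorm p (harmonic n - (p : ℚ)⁻¹ * harmonic (n / p)) ≤ 1 := by
  induction n with
  | zero => simp
  | succ n ih =>
    by_cases hdvd : p ∣ n + 1
    · have hp0 : (p : ℚ) ≠ 0 := Nat.cast_ne_zero.2 hp.out.ne_zero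
      have hn : ((n + 1 : ℕ) : ℚ) = p * ((n / p + 1 : ℕ) : ℚ) := by
        rw [← Nat.succ_div_of_dvd hdvd, ← Nat.cast_mul, Nat.mul_div_cancel' hdvd]
      rw [Nat.succ_div_of_dvd hdvd, harmonic_succ, harmonic_succ (n / p), hn]
      convert ih using 2
      field_simp
      ring
    · rw [Nat.succ_div_of_not_dvd hdvd, harmonic_succ, add_sub_right_comm]
      refine padicNorm.nonarchimedean.trans (max_le ih (le_of_eq ?_))
      rw [← one_div, padicNorm.div, padicNorm.one, (padicNorm.nat_eq_one_iff _).2 hdvd, div_one]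

theorem padicNorm_harmonic_eq_mul_of_one_le {n : ℕ} (h : 1 ≤ padicNorm p (harmonic (n / p))) :
    padicNorm p (harmonic n) = p * padicNorm p (harmonic (n / p)) := by
  have hp1 : (1 : ℚ) < p := by exact_mod_cast hp.out.one_lt
  have hmain :
      padicNorm p ((p : ℚ)⁻¹ * harmonic (n / p)) = p * padicNorm p (harmonic (n / p)) := by
    rw [padicNorm.mul, ← one_div, padicNorm.div, padicNorm.one, padicNorm.padicNorm_p_of_prime,
      one_div, inv_inv]
  have hlt : padicNorm p (harmonic n - (p : ℚ)⁻¹ * harmonic (n / p)) <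
      padicNorm p ((p : ℚ)⁻¹ * harmonic (n / p)) := by
    rw [hmain]
    nlinarith [padicNorm_harmonic_sub_inv_mul_harmonic_div_le_one (p := p) n]
  rw [← sub_add_cancel (harmonic n) ((p : ℚ)⁻¹ * harmonic (n / p)),
    padicNorm.add_eq_max_of_ne hlt.ne, max_eq_right hlt.le, hmain]

theorem padicNorm_harmonic_eq_pow_mul_of_one_le {n : ℕ} (a : ℕ)
    (h : 1 ≤ padicNorm p (harmonic (n / p ^ a))) :
    padicNorm p (harmonic n) = p ^ a * padicNorm p (harmonic (n / p ^ a)) := by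
  induction a with
  | zero => simp
  | succ a ih =>
    rw [pow_succ, ← Nat.div_div_eq_div_mul] at h
    have hstep := padicNorm_harmonic_eq_mul_of_one_le h
    have hp1 : (1 : ℚ) ≤ p := by exact_mod_cast hp.out.one_lt.le
    rw [ih (by rw [hstep]; nlinarith), hstep, pow_succ, mul_assoc, Nat.div_div_eq_div_mul,
      ← pow_succ]

theorem padicNorm_harmonic_div_pow_lt_one {n a : ℕ}
    (h : padicNorm p (harmonic n) < p ^ a) : padicNorm p (harmonic (n / p ^ a)) < 1 := by
  by_contra! h'
  rw [padicNorm_harmonic_eq_pow_mul_of_one_le a h'] at h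
  have : (0 : ℚ) < p ^ a := pow_pos (by exact_mod_cast hp.out.pos) a
  nlinarith

theorem padicNorm_harmonic_div_lt_one {n : ℕ} (h : padicNorm p (harmonic n) < 1) :
    padicNorm p (harmonic (n / p)) < 1 := by
  have hp1 : (1 : ℚ) < p ^ 1 := by rw [pow_one]; exact_mod_cast hp.out.one_lt
  simpa using padicNorm_harmonic_div_pow_lt_one (h.trans hp1)

theorem card_filter_range_pow_padicNorm_harmonic_lt_one_le (k : ℕ) :
    #{n ∈ range (p ^ k) | padicNorm p (harmonic n) < 1} ≤ ((p + 1) / 2) ^ k := by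
  induction k with
  | zero => simpa using card_filter_le (range 1) _
  | succ k ih =>
    have hmaps : ∀ n ∈ {n ∈ range (p ^ (k + 1)) | padicNorm p (harmonic n) < 1},
        n / p ∈ {n ∈ range (p ^ k) | padicNorm p (harmonic n) < 1} := fun n hn => by
      rw [mem_filter, mem_range] at hn ⊢
      exact ⟨Nat.div_lt_of_lt_mul (pow_succ' p k ▸ hn.1), padicNorm_harmonic_div_lt_one hn.2⟩
    have hfibre : ∀ b, #{n ∈ {n ∈ range (p ^ (k + 1)) | padicNorm p (harmonic n) < 1} |
        n / p = b} ≤ (p + 1) / 2 := fun b => by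
      refine card_le_of_subset_Ico_of_add_one_notMem (a := p * b) (fun n hn => ?_) ?_
      · exact Nat.mem_Ico_of_div_eq hp.out.pos (mem_filter.1 hn).2
      · intro n hn hn1
        simp only [mem_filter] at hn hn1
        exact (one_le_padicNorm_harmonic_succ hn.1.2).not_gt hn1.1.2
    calc _ ≤ (p + 1) / 2 * #{n ∈ range (p ^ k) | padicNorm p (harmonic n) < 1} :=
          card_le_mul_card_image_of_maps_to hmaps _ fun b _ => hfibre b
      _ ≤ ((p + 1) / 2) ^ (k + 1) := by
          rw [pow_succ']
          exact Nat.mul_le_mul_left _ ih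

theorem card_filter_Icc_padicNorm_harmonic_lt_pow_le (a N : ℕ) :
    #{n ∈ Icc 1 N | padicNorm p (harmonic n) < p ^ a} ≤
      p ^ a * ((p + 1) / 2) ^ (Nat.log p N + 1) := by
  have hmaps : ∀ n ∈ {n ∈ Icc 1 N | padicNorm p (harmonic n) < p ^ a},
      n / p ^ a ∈ {n ∈ range (p ^ (Nat.log p N + 1)) | padicNorm p (harmonic n) < 1} :=
    fun n hn => by
      rw [mem_filter, mem_Icc] at hn
      rw [mem_filter, mem_range]
      exact ⟨(Nat.div_le_self n _).trans_lt (hn.1.2.trans_lt (Nat.lt_pow_succ_log_self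
        hp.out.one_lt N)), padicNorm_harmonic_div_pow_lt_one hn.2⟩
  have hfibre : ∀ b, #{n ∈ {n ∈ Icc 1 N | padicNorm p (harmonic n) < p ^ a} |
      n / p ^ a = b} ≤ p ^ a := fun b => by
    refine (card_le_card fun n hn => Nat.mem_Ico_of_div_eq (pow_pos hp.out.pos a)
      (mem_filter.1 hn).2).trans ?_
    rw [Nat.card_Ico, Nat.add_sub_cancel_left]
  calc _ ≤ p ^ a * #{n ∈ range (p ^ (Nat.log p N + 1)) | padicNorm p (harmonic n) < 1} :=
        card_le_mul_card_image_of_maps_to hmaps _ fun b _ => hfibre b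
    _ ≤ p ^ a * ((p + 1) / 2) ^ (Nat.log p N + 1) :=
        Nat.mul_le_mul_left _ (card_filter_range_pow_padicNorm_harmonic_lt_one_le _)

theorem tendsto_card_filter_Icc_padicNorm_harmonic_lt_pow_div (a : ℕ) :
    Tendsto (fun N : ℕ => (#{n ∈ Icc 1 N | padicNorm p (harmonic n) < p ^ a} : ℝ) / N)
      atTop (nhds 0) := by
  set c : ℕ := (p + 1) / 2
  have hcp : (c : ℝ) < p := by
    have := hp.out.two_le
    exact_mod_cast (show c < p by omega)
  have hlim := (tendsto_pow_log_div_atTop_nhds_zero hp.out.one_lt c.cast_nonneg hcp).const_mul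
    ((p : ℝ) ^ a * c)
  rw [mul_zero] at hlim
  refine squeeze_zero (fun N => by positivity) (fun N => ?_) hlim
  rw [mul_div_assoc', mul_assoc, ← pow_succ']
  gcongr
  exact_mod_cast card_filter_Icc_padicNorm_harmonic_lt_pow_le a N

end Padic

theorem exists_mem_primeFactors_padicNorm_lt_of_not_dvd_den {m : ℕ} (hm : m ≠ 0) {q : ℚ}
    (h : ¬m ∣ q.den) : ∃ p ∈ m.primeFactors, padicNorm p q < p ^ m.factorization p := by
  contrapose! h
  refine (Nat.factorization_prime_le_iff_dvd hm q.den_nz).1 fun p hp => ?_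
  by_cases hpm : p ∣ m
  · have : Fact p.Prime := ⟨hp⟩
    exact (hp.pow_dvd_iff_le_factorization q.den_nz).1
      (pow_dvd_den_of_pow_le_padicNorm (h p (Nat.mem_primeFactors.2 ⟨hp, hpm, hm⟩)))
  · simp [Nat.factorization_eq_zero_of_not_dvd hpm]

theorem card_filter_not_dvd_den_le_sum {m : ℕ} (hm : m ≠ 0) (s : Finset ℕ) (f : ℕ → ℚ) :
    #{n ∈ s | ¬m ∣ (f n).den} ≤
      ∑ p ∈ m.primeFactors, #{n ∈ s | padicNorm p (f n) < p ^ m.factorization p} := by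
  refine (card_le_card fun n hn => ?_).trans card_biUnion_le
  rw [mem_filter] at hn
  obtain ⟨p, hp, hlt⟩ := exists_mem_primeFactors_padicNorm_lt_of_not_dvd_den hm hn.2
  exact mem_biUnion.2 ⟨p, hp, mem_filter.2 ⟨hn.1, hlt⟩⟩

/-- For any positive integer `m`, the set of positive integers `n` such that `m` divides the
denominator `v_n` of the `n`-th harmonic number has natural density one. -/
theorem density_one_dvd_harmonic_den (m : ℕ) (hm : 0 < m) :
    Filter.Tendsto
      (fun x : ℝ =>
        (((Finset.Icc 1 ⌊x⌋₊).filter (fun n : ℕ => m ∣ (harmonic n).den)).card : ℝ) / x)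
      Filter.atTop (nhds 1) := by
  refine tendsto_natFloor_div_of_tendsto_div (tendsto_card_filter_Icc_div_nhds_one ?_)
  have hprime : ∀ p ∈ m.primeFactors, Tendsto (fun N : ℕ =>
      (#{n ∈ Icc 1 N | padicNorm p (harmonic n) < p ^ m.factorization p} : ℝ) / N)
      atTop (nhds 0) := fun p hp =>
    have : Fact p.Prime := ⟨Nat.prime_of_mem_primeFactors hp⟩
    tendsto_card_filter_Icc_padicNorm_harmonic_lt_pow_div _
  have hsum := tendsto_finsetSum _ hprime
  rw [sum_const_zero] at hsum
  refine squeeze_zero (fun N => by positivity) (fun N => ?_) hsum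
  rw [← sum_div]
  gcongr
  exact_mod_cast card_filter_not_dvd_den_le_sum hm.ne' (Icc 1 N) harmonic
end

section
/- For any prime p and any positive integer k, the set I_{p^k} of positive integers n with p^k not dividing v_n satisfies I_{p^k} = { p^k·n_1 + r : n_1 ∈ J_p ∪ {0}, 0 ≤ r ≤ p^k − 1 } \ {0}. -/
/-!
Since `H n - H (n / p) / p` is the sum of the `1 / i` with `i ≤ n` prime to `p`, it is a `p`-adic
integer. Hence `‖H n‖_p = p * ‖H (n / p)‖_p` once `‖H (n / p)‖_p ≥ 1`, and `‖H n‖_p ≤ 1` otherwise.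
Iterating, `p ^ k ∣ v_n ↔ p ^ k ≤ ‖H n‖_p ↔ 1 ≤ ‖H (n / p ^ k)‖_p ↔ p ∤ u_(n / p ^ k)`, and the
set description follows by writing `n = p ^ k * n₁ + r`, with `H 0 = 0` accounting for `n₁ = 0`.
-/

namespace padicNorm

variable {p : ℕ} [Fact p.Prime]

theorem eq_num_div_den (q : ℚ) : padicNorm p q = padicNorm p q.num / padicNorm p q.den := by
  rw [← padicNorm.div, Rat.num_div_den]

theorem den_eq_one_of_dvd_num {q : ℚ} (h : (p : ℤ) ∣ q.num) : padicNorm p q.den = 1 :=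
  (nat_eq_one_iff _).mpr fun hden => (Fact.out : p.Prime).one_lt.ne'
    (Nat.eq_one_of_dvd_coprimes q.reduced (Int.natCast_dvd.mp h) hden)

theorem den_pos (q : ℚ) : 0 < padicNorm p q.den :=
  lt_of_le_of_ne (padicNorm.nonneg _) (padicNorm.nonzero (Nat.cast_ne_zero.mpr q.den_nz)).symm

theorem lt_one_iff_dvd_num (q : ℚ) : padicNorm p q < 1 ↔ (p : ℤ) ∣ q.num := by
  by_cases hnum : (p : ℤ) ∣ q.num
  · rw [eq_num_div_den, den_eq_one_of_dvd_num hnum, div_one, int_lt_one_iff]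
  · rw [eq_num_div_den, (int_eq_one_iff q.num).mpr hnum, div_lt_one₀ (den_pos q)]
    simpa [hnum] using padicNorm.of_nat (p := p) q.den

theorem le_inv_of_lt_one {q : ℚ} (h : padicNorm p q < 1) : padicNorm p q ≤ (p : ℚ)⁻¹ := by
  rcases eq_or_ne q 0 with rfl | hq
  · simp
  have hp : (1 : ℚ) < p := mod_cast (Fact.out : p.Prime).one_lt
  rw [padicNorm.eq_zpow_of_nonzero hq, ← zpow_neg_one] at *
  rw [← zpow_zero (p : ℚ), zpow_lt_zpow_iff_right₀ hp] at h
  exact zpow_le_zpow_right₀ hp.le (by omega)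

theorem pow_dvd_den_iff_pow_le {k : ℕ} (hk : 0 < k) (q : ℚ) :
    p ^ k ∣ q.den ↔ (p : ℚ) ^ k ≤ padicNorm p q := by
  by_cases hnum : (p : ℤ) ∣ q.num
  · have hp : (1 : ℚ) < p := mod_cast (Fact.out : p.Prime).one_lt
    have hden := den_eq_one_of_dvd_num hnum
    refine iff_of_false (fun hdvd => ?_) (not_le.mpr ?_)
    · rw [nat_eq_one_iff] at hden
      exact hden (dvd_trans (dvd_pow_self p hk.ne') hdvd)
    · exact ((lt_one_iff_dvd_num q).mpr hnum).trans (one_lt_pow₀ hp hk.ne')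
  · have hp : (0 : ℚ) < p := mod_cast (Fact.out : p.Prime).pos
    rw [eq_num_div_den, (int_eq_one_iff q.num).mpr hnum, le_div_iff₀ (den_pos q),
      ← le_div_iff₀' (pow_pos hp k), one_div, ← zpow_natCast, ← zpow_neg,
      ← Int.natCast_dvd_natCast]
    simpa using dvd_iff_norm_le (p := p) (n := k) (z := q.den)

theorem pow_succ_le_iff_of_sub_div_le_one {a b : ℚ} (h : padicNorm p (a - b / p) ≤ 1) (j : ℕ) :
    (p : ℚ) ^ (j + 1) ≤ padicNorm p a ↔ (p : ℚ) ^ j ≤ padicNorm p b := by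
  have hp : (1 : ℚ) < p := mod_cast (Fact.out : p.Prime).one_lt
  have hdiv : padicNorm p (b / p) = padicNorm p b * p := by
    rw [padicNorm.div, padicNorm_p_of_prime, div_inv_eq_mul]
  rcases le_or_gt 1 (padicNorm p b) with hb | hb
  · have hlt : padicNorm p (a - b / p) < padicNorm p (b / p) := by
      rw [hdiv]
      exact h.trans_lt (hp.trans_le (le_mul_of_one_le_left (by positivity) hb))
    have ha : padicNorm p a = padicNorm p b * p := by
      rw [← sub_add_cancel a (b / p), add_eq_max_of_ne hlt.ne, max_eq_right hlt.le, hdiv]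
    rw [ha, pow_succ, mul_le_mul_iff_left₀ (by positivity)]
  · refine iff_of_false (not_le.mpr ?_) (not_le.mpr (hb.trans_le (one_le_pow₀ hp.le)))
    have hbp : padicNorm p (b / p) ≤ 1 := by
      rw [hdiv, ← inv_mul_cancel₀ (by positivity : (p : ℚ) ≠ 0)]
      exact mul_le_mul_of_nonneg_right (le_inv_of_lt_one hb) (by positivity)
    calc padicNorm p a = padicNorm p (a - b / p + b / p) := by rw [sub_add_cancel]
      _ ≤ max (padicNorm p (a - b / p)) (padicNorm p (b / p)) := padicNorm.nonarchimedean
      _ ≤ 1 := max_le h hbp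
      _ < (p : ℚ) ^ (j + 1) := one_lt_pow₀ hp (Nat.succ_ne_zero j)

end padicNorm

section harmonic

variable {p : ℕ} [Fact p.Prime]

theorem padicNorm_harmonic_sub_harmonic_div_le_one (n : ℕ) :
    padicNorm p (harmonic n - harmonic (n / p) / p) ≤ 1 := by
  induction n with
  | zero => simp
  | succ n ih =>
    by_cases h : p ∣ n + 1
    · have hmul : n + 1 = (n / p + 1) * p := by
        rw [← Nat.succ_div_of_dvd h, Nat.div_mul_cancel h]
      convert ih using 2
      rw [Nat.succ_div_of_dvd h, harmonic_succ, harmonic_succ, hmul, Nat.cast_mul]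
      field_simp
      ring
    · rw [Nat.succ_div_of_not_dvd h, harmonic_succ, add_sub_right_comm]
      refine padicNorm.nonarchimedean.trans (max_le ih (le_of_eq ?_))
      rw [← one_div, padicNorm.div, padicNorm.one, (padicNorm.nat_eq_one_iff _).mpr h, div_one]

theorem pow_le_padicNorm_harmonic_iff (j n : ℕ) :
    (p : ℚ) ^ j ≤ padicNorm p (harmonic n) ↔ 1 ≤ padicNorm p (harmonic (n / p ^ j)) := by
  induction j generalizing n with
  | zero => simp
  | succ j ih =>
    rw [padicNorm.pow_succ_le_iff_of_sub_div_le_one (padicNorm_harmonic_sub_harmonic_div_le_one n),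
      ih, Nat.div_div_eq_div_mul, ← pow_succ']

theorem not_pow_dvd_harmonic_den_iff {k : ℕ} (hk : 0 < k) (n : ℕ) :
    ¬ p ^ k ∣ (harmonic n).den ↔ (p : ℤ) ∣ (harmonic (n / p ^ k)).num := by
  rw [padicNorm.pow_dvd_den_iff_pow_le hk, pow_le_padicNorm_harmonic_iff, not_le,
    padicNorm.lt_one_iff_dvd_num]

end harmonic

/-- For any prime `p` and positive integer `k`, the set of positive integers `n` with
`p^k ∤ v_n` equals `{p^k * n₁ + r : n₁ ∈ J_p ∪ {0}, 0 ≤ r ≤ p^k - 1} \ {0}`, where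
`J_p` is the set of positive integers `n` with `p ∣ u_n`. -/
theorem not_dvd_harmonic_den_set_eq (p : ℕ) (hp : p.Prime) (k : ℕ) (hk : 0 < k) :
    {n : ℕ | 0 < n ∧ ¬ p ^ k ∣ (harmonic n).den} =
      {n : ℕ | ∃ n₁ r : ℕ,
          (n₁ ∈ {n : ℕ | 0 < n ∧ (p : ℤ) ∣ (harmonic n).num} ∪ {0}) ∧
          r ≤ p ^ k - 1 ∧ n = p ^ k * n₁ + r} \ {0} := by
  have := Fact.mk hp
  have hpk : 0 < p ^ k := pow_pos hp.pos k
  have hJ (m : ℕ) : (0 < m ∧ (p : ℤ) ∣ (harmonic m).num ∨ m = 0) ↔ (p : ℤ) ∣ (harmonic m).num := by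
    rcases eq_or_ne m 0 with rfl | hm <;> simp [*, Nat.pos_of_ne_zero]
  ext n
  simp only [Set.mem_ofPred_eq, Set.mem_sdiff, Set.mem_union, Set.mem_singleton_iff, hJ,
    not_pow_dvd_harmonic_den_iff hk]
  constructor
  · rintro ⟨hn, hdvd⟩
    have hr := Nat.mod_lt n hpk
    exact ⟨⟨n / p ^ k, n % p ^ k, hdvd, by omega, (Nat.div_add_mod n _).symm⟩, hn.ne'⟩
  · rintro ⟨⟨n₁, r, hdvd, hr, rfl⟩, hn⟩
    refine ⟨Nat.pos_of_ne_zero hn, ?_⟩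
    rwa [Nat.mul_add_div hpk, Nat.div_eq_of_lt (by omega), add_zero]
end

section
/- For any prime p, any positive integer k, and any positive integer n with n < p^k, the prime power p^k does not divide v_n. -/
/-!
Every term `1/i` with `i ≤ n` has `p`-adic valuation `-v_p(i) ≥ -log_p n`, so by the ultrametric
inequality `v_p(H_n) ≥ -log_p n > -k`. On the other hand, if `p` divides the denominator of a
reduced fraction it does not divide the numerator, so `v_p(H_n) = -v_p(v_n)`, which would be
at most `-k` if `p^k ∣ v_n`.
-/

theorem padicValRat_eq_neg_padicValNat_den {p : ℕ} [Fact p.Prime] {q : ℚ} (h : p ∣ q.den) :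
    padicValRat p q = -padicValNat p q.den := by
  have hnum : ¬ (p : ℤ) ∣ q.num := fun hnum =>
    (Fact.out : p.Prime).one_lt.ne' <| Nat.eq_one_of_dvd_coprimes q.reduced
      (Int.natCast_dvd.mp hnum) h
  rw [padicValRat_def, padicValInt.eq_zero_of_not_dvd hnum, Nat.cast_zero, zero_sub]

theorem neg_log_le_padicValRat_harmonic (p : ℕ) [Fact p.Prime] (n : ℕ) :
    -(Nat.log p n : ℤ) ≤ padicValRat p (harmonic n) := by
  induction n with
  | zero => simp
  | succ n ih =>
    have hterm : -(Nat.log p (n + 1) : ℤ) ≤ padicValRat p (↑(n + 1))⁻¹ := by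
      rw [padicValRat.inv, padicValRat.of_nat, neg_le_neg_iff, Nat.cast_le]
      exact padicValNat_le_nat_log (n + 1)
    have hmono : (Nat.log p n : ℤ) ≤ Nat.log p (n + 1) :=
      Nat.cast_le.mpr (Nat.log_mono_right n.le_succ)
    rw [harmonic_succ]
    calc -(Nat.log p (n + 1) : ℤ)
        ≤ min (padicValRat p (harmonic n)) (padicValRat p (↑(n + 1))⁻¹) :=
          le_min (by omega) hterm
      _ ≤ padicValRat p (harmonic n + (↑(n + 1))⁻¹) :=
          padicValRat.min_le_padicValRat_add (harmonic_succ n ▸ (harmonic_pos n.succ_ne_zero).ne')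

theorem not_dvd_harmonic_den_of_lt_general (p : ℕ) (hp : p.Prime) (k : ℕ) (hk : 0 < k)
    (n : ℕ) (hnp : n < p ^ k) :
    ¬ p ^ k ∣ (harmonic n).den := by
  have : Fact p.Prime := ⟨hp⟩
  intro hdvd
  have hval := padicValRat_eq_neg_padicValNat_den (dvd_trans (dvd_pow_self p hk.ne') hdvd)
  have hden : k ≤ padicValNat p (harmonic n).den :=
    (padicValNat_dvd_iff_le (harmonic n).den_nz).mp hdvd
  have hlog : Nat.log p n < k := Nat.log_lt_of_lt_pow' hk.ne' hnp
  have hbound := neg_log_le_padicValRat_harmonic p n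
  omega

/-- For a prime `p`, positive integer `k` and positive integer `n < p^k`, the prime power `p^k`
does not divide the denominator `v_n` of the `n`-th harmonic number. -/
theorem not_dvd_harmonic_den_of_lt (p : ℕ) (hp : p.Prime) (k : ℕ) (hk : 0 < k)
    (n : ℕ) (hn : 0 < n) (hnp : n < p ^ k) :
    ¬ p ^ k ∣ (harmonic n).den :=
  not_dvd_harmonic_den_of_lt_general p hp k hk n hnp
end

section
/- Let p be a prime, k a positive integer, and n ≥ p^k a positive integer. Write n = p^k·n_1 + r with integers n_1 ≥ 1 and 0 ≤ r ≤ p^k − 1. If p divides the numerator u_{n_1} of H_{n_1}, then p^k does not divide v_n. -/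
/-!
Among the terms `1/i`, `i ≤ n`, those with `p ^ k ∣ i` add up to `H_{n₁} / p ^ k`, because
`n₁ = ⌊n / p ^ k⌋`; the others have `p`-adic norm `p ^ v_p(i) ≤ p ^ (k - 1)`. As `p ∣ u_{n₁}`,
also `|H_{n₁} / p ^ k|_p ≤ p ^ (k - 1)`, so the ultrametric inequality gives
`|H_n|_p ≤ p ^ (k - 1)`, whereas `p ^ k ∣ v_n` would force `|H_n|_p ≥ p ^ k`.
-/

open Finset

lemma harmonic_eq_inv_mul_harmonic_div_add_sum (d n : ℕ) :
    harmonic n = (d : ℚ)⁻¹ * harmonic (n / d) + ∑ i ∈ Icc 1 n with ¬ d ∣ i, (i : ℚ)⁻¹ := by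
  rcases d.eq_zero_or_pos with rfl | hd
  · rw [harmonic_eq_sum_Icc, filter_true_of_mem fun i hi =>
      zero_dvd_iff.not.2 (Nat.one_le_iff_ne_zero.1 (mem_Icc.1 hi).1)]
    simp
  have hmultiples : {i ∈ Icc 1 n | d ∣ i} =
      (Icc 1 (n / d)).map ⟨(d * ·), mul_right_injective₀ hd.ne'⟩ := by
    ext i
    simp only [mem_filter, mem_Icc, mem_map, Function.Embedding.coeFn_mk]
    constructor
    · rintro ⟨⟨hi, hin⟩, j, rfl⟩
      exact ⟨j, ⟨Nat.pos_of_mul_pos_left hi, (Nat.le_div_iff_mul_le hd).2 (by linarith)⟩, rfl⟩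
    · rintro ⟨j, ⟨hj, hjn⟩, rfl⟩
      have := (Nat.le_div_iff_mul_le hd).1 hjn
      exact ⟨⟨Nat.mul_pos hd hj, by linarith⟩, dvd_mul_right d j⟩
  rw [harmonic_eq_sum_Icc, harmonic_eq_sum_Icc, ← sum_filter_add_sum_filter_not _ (d ∣ ·),
    hmultiples, sum_map, mul_sum]
  simp [mul_comm]

lemma Rat.not_dvd_den_of_dvd_num {p : ℕ} (hp : p ≠ 1) {q : ℚ} (h : (p : ℤ) ∣ q.num) :
    ¬ p ∣ q.den :=
  fun hden => hp (Nat.eq_one_of_dvd_coprimes q.reduced (Int.natCast_dvd.1 h) hden)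

section padicNorm

variable {p : ℕ} [hp : Fact p.Prime]

lemma padicNorm_inv_natCast {i : ℕ} (hi : i ≠ 0) :
    padicNorm p (i : ℚ)⁻¹ = (p : ℚ) ^ padicValNat p i := by
  rw [padicNorm.eq_zpow_of_nonzero (by positivity), padicValRat.inv, padicValRat.of_nat, neg_neg,
    zpow_natCast]

lemma padicNorm_le_inv_of_dvd_num {q : ℚ} (h : (p : ℤ) ∣ q.num) :
    padicNorm p q ≤ (p : ℚ)⁻¹ := by
  rw [← Rat.num_div_den q, padicNorm.div,
    (padicNorm.nat_eq_one_iff _).2 (Rat.not_dvd_den_of_dvd_num hp.out.ne_one h), div_one]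
  simpa using (padicNorm.dvd_iff_norm_le (n := 1)).1 (by simpa using h)

lemma padicNorm_eq_pow_padicValNat_den {q : ℚ} (h : p ∣ q.den) :
    padicNorm p q = (p : ℚ) ^ padicValNat p q.den := by
  have hnum : ¬ (p : ℤ) ∣ q.num := fun hnum => Rat.not_dvd_den_of_dvd_num hp.out.ne_one hnum h
  have hq : q ≠ 0 := by
    rintro rfl
    exact hp.out.ne_one (Nat.dvd_one.1 h)
  rw [padicNorm.eq_zpow_of_nonzero hq, padicValRat, padicValInt.eq_zero_of_not_dvd hnum,
    Nat.cast_zero, zero_sub, neg_neg, zpow_natCast]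

lemma not_pow_succ_dvd_den_of_padicNorm_le {q : ℚ} {k : ℕ} (h : padicNorm p q ≤ (p : ℚ) ^ k) :
    ¬ p ^ (k + 1) ∣ q.den := by
  intro hdvd
  rw [padicNorm_eq_pow_padicValNat_den ((dvd_pow_self p k.succ_ne_zero).trans hdvd)] at h
  have hval_ge := (padicValNat_dvd_iff_le q.den_nz).1 hdvd
  have hval_le := (pow_le_pow_iff_right₀ (by exact_mod_cast hp.out.one_lt : (1 : ℚ) < p)).1 h
  omega

lemma padicNorm_harmonic_le (n k : ℕ) (h : (p : ℤ) ∣ (harmonic (n / p ^ (k + 1))).num) :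
    padicNorm p (harmonic n) ≤ (p : ℚ) ^ k := by
  rw [harmonic_eq_inv_mul_harmonic_div_add_sum (p ^ (k + 1))]
  refine padicNorm.nonarchimedean.trans
    (max_le ?_ (padicNorm.sum_le' (fun i hi => ?_) (by positivity)))
  · rw [padicNorm.mul, padicNorm_inv_natCast (pow_ne_zero _ hp.out.ne_zero),
      padicValNat.prime_pow]
    calc (p : ℚ) ^ (k + 1) * padicNorm p (harmonic (n / p ^ (k + 1)))
        ≤ (p : ℚ) ^ (k + 1) * (p : ℚ)⁻¹ := by gcongr; exact padicNorm_le_inv_of_dvd_num h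
      _ = (p : ℚ) ^ k := by rw [pow_succ, mul_inv_cancel_right₀ (mod_cast hp.out.ne_zero)]
  · obtain ⟨hi, hndvd⟩ := mem_filter.1 hi
    have hi0 : i ≠ 0 := Nat.one_le_iff_ne_zero.1 (mem_Icc.1 hi).1
    have hval : padicValNat p i ≤ k := by
      by_contra! hlt
      exact hndvd ((padicValNat_dvd_iff_le hi0).2 hlt)
    rw [padicNorm_inv_natCast hi0]
    exact pow_le_pow_right₀ (by exact_mod_cast hp.out.one_lt.le) hval

end padicNorm

theorem not_dvd_harmonic_den_of_dvd_num_general (p : ℕ) (hp : p.Prime) (k : ℕ) (hk : 0 < k)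
    (n n₁ r : ℕ) (hr : r ≤ p ^ k - 1)
    (heq : n = p ^ k * n₁ + r) (hdvd : (p : ℤ) ∣ (harmonic n₁).num) :
    ¬ p ^ k ∣ (harmonic n).den := by
  have := Fact.mk hp
  obtain ⟨m, rfl⟩ : ∃ m, k = m + 1 := ⟨k - 1, by omega⟩
  have hpow : 0 < p ^ (m + 1) := pow_pos hp.pos _
  have hquot : n / p ^ (m + 1) = n₁ := by
    rw [heq, Nat.mul_add_div hpow, Nat.div_eq_of_lt (by omega), add_zero]
  exact not_pow_succ_dvd_den_of_padicNorm_le (padicNorm_harmonic_le n m (hquot ▸ hdvd))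

/-- Let `p` be prime, `k ≥ 1`, and `n ≥ p^k` with `n = p^k * n₁ + r`, `n₁ ≥ 1`,
`0 ≤ r ≤ p^k - 1`. If `p` divides the numerator `u_{n₁}` of `H_{n₁}`, then `p^k` does not
divide the denominator `v_n` of `H_n`. -/
theorem not_dvd_harmonic_den_of_dvd_num (p : ℕ) (hp : p.Prime) (k : ℕ) (hk : 0 < k)
    (n n₁ r : ℕ) (hn : p ^ k ≤ n) (hn₁ : 1 ≤ n₁) (hr : r ≤ p ^ k - 1)
    (heq : n = p ^ k * n₁ + r) (hdvd : (p : ℤ) ∣ (harmonic n₁).num) :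
    ¬ p ^ k ∣ (harmonic n).den :=
  not_dvd_harmonic_den_of_dvd_num_general p hp k hk n n₁ r hr heq hdvd
end

section
/- For any prime p, any positive integer k, and any real number x > p^k, the number of positive integers n ≤ x such that p^k does not divide v_n is at most p^k·(J_p(x/p^k) + 1), where J_p(y) denotes the number of elements of J_p that are at most y. -/
/-!
Split `H_n = p⁻¹ H_{⌊n/p⌋} + ∑_{i ≤ n, p ∤ i} 1/i`. The second sum is `p`-integral, so whenever
`v_p(H_{⌊n/p⌋}) ≤ 0` the first term dominates and `v_p(H_n) = v_p(H_{⌊n/p⌋}) - 1`. Iterating,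
if `m = ⌊n/p^k⌋ ≥ 1` and `p ∤ u_m`, then `v_p(H_n) = v_p(H_m) - k ≤ -k`, i.e. `p^k ∣ v_n`.
So `n ↦ ⌊n/p^k⌋` maps every `n ≤ x` with `p^k ∤ v_n` into `{0} ∪ (J_p ∩ [1, x/p^k])`,
and each fibre of this map has at most `p^k` elements.
-/

open Finset

namespace padicValRat

theorem le_sum_of_le {p : ℕ} [Fact p.Prime] {ι : Type*} {s : Finset ι} {F : ι → ℚ} {c : ℤ}
    (hF : ∀ i ∈ s, c ≤ padicValRat p (F i)) (hs : ∑ i ∈ s, F i ≠ 0) :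
    c ≤ padicValRat p (∑ i ∈ s, F i) := by
  classical
  induction s using Finset.induction_on with
  | empty => simp at hs
  | insert a s ha ih =>
    rw [sum_insert ha] at hs ⊢
    by_cases hs0 : ∑ i ∈ s, F i = 0
    · simpa [hs0] using hF a (mem_insert_self a s)
    exact (le_min (hF a (mem_insert_self a s))
      (ih (fun i hi => hF i (mem_insert_of_mem hi)) hs0)).trans (min_le_padicValRat_add hs)

theorem nonpos_of_not_dvd_num {p : ℕ} {q : ℚ} (h : ¬ (p : ℤ) ∣ q.num) : padicValRat p q ≤ 0 := by
  rw [padicValRat_def, padicValInt.eq_zero_of_not_dvd h]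
  simp

end padicValRat

theorem Rat.pow_dvd_den_of_padicValRat_le {p k : ℕ} [Fact p.Prime] {q : ℚ}
    (h : padicValRat p q ≤ -k) : p ^ k ∣ q.den := by
  rw [padicValNat_dvd_iff_le q.den_nz]
  rw [padicValRat_def] at h
  omega

theorem Nat.Icc_filter_dvd_eq_image {p : ℕ} (hp : 0 < p) (n : ℕ) :
    {i ∈ Icc 1 n | p ∣ i} = (Icc 1 (n / p)).image (p * ·) := by
  ext i
  simp only [mem_filter, mem_Icc, mem_image]
  constructor
  · rintro ⟨⟨hi1, hin⟩, j, rfl⟩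
    exact ⟨j, ⟨Nat.pos_of_mul_pos_left hi1, (Nat.le_div_iff_mul_le hp).2 (by linarith)⟩, rfl⟩
  · rintro ⟨j, ⟨hj1, hjn⟩, rfl⟩
    exact ⟨⟨Nat.mul_pos hp hj1, by rw [mul_comm]; exact (Nat.le_div_iff_mul_le hp).1 hjn⟩,
      dvd_mul_right p j⟩

theorem harmonic_eq_inv_mul_harmonic_div_add {p : ℕ} (hp : 0 < p) (n : ℕ) :
    harmonic n = (p : ℚ)⁻¹ * harmonic (n / p) + ∑ i ∈ Icc 1 n with ¬ p ∣ i, (i : ℚ)⁻¹ := by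
  rw [harmonic_eq_sum_Icc, harmonic_eq_sum_Icc, ← sum_filter_add_sum_filter_not _ (p ∣ ·),
    Nat.Icc_filter_dvd_eq_image hp, sum_image (fun _ _ _ _ h => Nat.eq_of_mul_eq_mul_left hp h),
    mul_sum]
  simp only [Nat.cast_mul, mul_inv]

theorem padicValRat_harmonic_eq_sub_one {p n : ℕ} [Fact p.Prime] (hn : 0 < n / p)
    (hv : padicValRat p (harmonic (n / p)) ≤ 0) :
    padicValRat p (harmonic n) = padicValRat p (harmonic (n / p)) - 1 := by
  have hp : p.Prime := Fact.out
  have hpH : (p : ℚ)⁻¹ * harmonic (n / p) ≠ 0 :=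
    mul_ne_zero (inv_ne_zero (mod_cast hp.ne_zero)) (harmonic_pos hn.ne').ne'
  have hvpH : padicValRat p ((p : ℚ)⁻¹ * harmonic (n / p)) =
      padicValRat p (harmonic (n / p)) - 1 := by
    rw [padicValRat.mul (inv_ne_zero (mod_cast hp.ne_zero)) (harmonic_pos hn.ne').ne',
      padicValRat.inv, padicValRat.self hp.one_lt]
    ring
  have hH : harmonic n ≠ 0 := (harmonic_pos (by rintro rfl; simp at hn)).ne'
  rw [harmonic_eq_inv_mul_harmonic_div_add hp.pos n] at hH ⊢
  rw [← hvpH]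
  set S := ∑ i ∈ Icc 1 n with ¬ p ∣ i, (i : ℚ)⁻¹
  by_cases hS : S = 0
  · rw [hS, add_zero]
  -- the terms of `S` are `p`-adic units, so `S` is `p`-integral
  have hvS : 0 ≤ padicValRat p S := padicValRat.le_sum_of_le (fun i hi => by
    rw [padicValRat.inv, padicValRat.of_nat, padicValNat.eq_zero_of_not_dvd (mem_filter.1 hi).2]
    simp) hS
  exact padicValRat.add_eq_of_lt hH hpH hS (by omega)

theorem padicValRat_harmonic_eq_sub {p : ℕ} [Fact p.Prime] :
    ∀ {k n : ℕ}, 0 < n / p ^ k → padicValRat p (harmonic (n / p ^ k)) ≤ 0 →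
      padicValRat p (harmonic n) = padicValRat p (harmonic (n / p ^ k)) - k
  | 0, n, _, _ => by simp
  | k + 1, n, hn, hv => by
    rw [pow_succ', ← Nat.div_div_eq_div_mul] at hn hv ⊢
    have hnp := padicValRat_harmonic_eq_sub (k := k) hn hv
    have hnp0 : 0 < n / p := Nat.pos_of_ne_zero fun h => by simp [h] at hn
    rw [padicValRat_harmonic_eq_sub_one hnp0 (by omega), hnp]
    push_cast
    ring

theorem dvd_harmonic_num_div_pow_of_not_pow_dvd_den {p k n : ℕ} [Fact p.Prime]
    (h : ¬ p ^ k ∣ (harmonic n).den) (hn : 0 < n / p ^ k) :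
    (p : ℤ) ∣ (harmonic (n / p ^ k)).num := by
  by_contra hnum
  have hv := padicValRat.nonpos_of_not_dvd_num hnum
  exact h (Rat.pow_dvd_den_of_padicValRat_le (by rw [padicValRat_harmonic_eq_sub hn hv]; omega))

theorem Finset.card_le_mul_card_of_div_mem {N : ℕ} (hN : 0 < N) {s t : Finset ℕ}
    (h : ∀ n ∈ s, n / N ∈ t) : #s ≤ N * #t := by
  refine card_le_mul_card_image_of_maps_to h N fun m _ => ?_
  calc #{n ∈ s | n / N = m} ≤ #(Ico (m * N) (m * N + N)) := card_le_card fun n hn => by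
        rw [mem_Ico, ← (mem_filter.1 hn).2]
        exact ⟨Nat.div_mul_le_self n N, Nat.lt_div_mul_add hN⟩
    _ = N := by simp

theorem count_not_dvd_harmonic_den_le_Jp_general (p : ℕ) (hp : p.Prime) (k : ℕ)
    (x : ℝ) :
    (((Finset.Icc 1 ⌊x⌋₊).filter (fun n : ℕ => ¬ p ^ k ∣ (harmonic n).den)).card : ℝ) ≤
      (p : ℝ) ^ k *
        ((((Finset.Icc 1 ⌊x / (p : ℝ) ^ k⌋₊).filter
            (fun n : ℕ => (p : ℤ) ∣ (harmonic n).num)).card : ℝ) + 1) := by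
  have := Fact.mk hp
  set J := (Finset.Icc 1 ⌊x / (p : ℝ) ^ k⌋₊).filter (fun n : ℕ => (p : ℤ) ∣ (harmonic n).num)
  have hfloor : ⌊x / (p : ℝ) ^ k⌋₊ = ⌊x⌋₊ / p ^ k := by
    rw [← Nat.floor_div_natCast, Nat.cast_pow]
  set s := (Finset.Icc 1 ⌊x⌋₊).filter (fun n : ℕ => ¬ p ^ k ∣ (harmonic n).den)
  have hmaps : ∀ n ∈ s, n / p ^ k ∈ insert 0 J := by
    intro n hn
    obtain ⟨hn, hden⟩ := mem_filter.1 hn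
    rcases (n / p ^ k).eq_zero_or_pos with h0 | hpos
    · exact h0 ▸ mem_insert_self 0 J
    refine mem_insert_of_mem (mem_filter.2 ⟨mem_Icc.2 ⟨hpos, ?_⟩,
      dvd_harmonic_num_div_pow_of_not_pow_dvd_den hden hpos⟩)
    exact hfloor ▸ Nat.div_le_div_right (mem_Icc.1 hn).2
  have hcard := (card_le_mul_card_of_div_mem (pow_pos hp.pos k) hmaps).trans
    (Nat.mul_le_mul_left _ (card_insert_le 0 J))
  exact_mod_cast hcard

/-- For any prime `p`, positive integer `k` and real `x > p^k`, the number of positive integers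
`n ≤ x` with `p^k ∤ v_n` is at most `p^k * (J_p(x / p^k) + 1)`, where `J_p(y)` counts positive
integers `n ≤ y` with `p ∣ u_n`. -/
theorem count_not_dvd_harmonic_den_le_Jp (p : ℕ) (hp : p.Prime) (k : ℕ) (hk : 0 < k)
    (x : ℝ) (hx : (p : ℝ) ^ k < x) :
    (((Finset.Icc 1 ⌊x⌋₊).filter (fun n : ℕ => ¬ p ^ k ∣ (harmonic n).den)).card : ℝ) ≤
      (p : ℝ) ^ k *
        ((((Finset.Icc 1 ⌊x / (p : ℝ) ^ k⌋₊).filter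
            (fun n : ℕ => (p : ℤ) ∣ (harmonic n).num)).card : ℝ) + 1) :=
  count_not_dvd_harmonic_den_le_Jp_general p hp k x
end

section
/- The set of positive integers n such that 4 does not divide v_n is exactly {1, 2, 3}, and the set of positive integers n such that 2 does not divide v_n is exactly {1}; in particular, v_n is even for every integer n ≥ 2. -/
/-! The 2-adic valuation of `H_n` is `-⌊log₂ n⌋`: among `1, …, n` the largest power of two
`2^k ≤ n` is the only term of maximal 2-adic valuation. Since numerator and denominator are
coprime, `v_n` carries exactly this power of two, so `2^k ∣ v_n ↔ 2^k ≤ n`; take `k = 1, 2`. -/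

theorem padicValNat_den_eq_neg_padicValRat {p : ℕ} [hp : Fact p.Prime] {q : ℚ}
    (hq : padicValRat p q ≤ 0) : (padicValNat p q.den : ℤ) = -padicValRat p q := by
  rw [padicValRat_def] at hq ⊢
  suffices padicValInt p q.num = 0 by omega
  by_cases hden : p ∣ q.den
  · refine padicValInt.eq_zero_of_not_dvd fun hnum => hp.out.one_lt.ne' ?_
    exact (Nat.Coprime.coprime_dvd_left (Int.natCast_dvd.mp hnum) q.reduced).eq_one_of_dvd hden
  · have : 0 ≤ (padicValInt p q.num : ℤ) := by positivity
    rw [padicValNat.eq_zero_of_not_dvd hden] at hq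
    omega

theorem padicValNat_two_harmonic_den (n : ℕ) : padicValNat 2 (harmonic n).den = Nat.log 2 n := by
  have h := padicValRat_two_harmonic n
  have := padicValNat_den_eq_neg_padicValRat (p := 2) (q := harmonic n) (by simp [h])
  omega

theorem two_pow_dvd_harmonic_den_iff {n : ℕ} (hn : n ≠ 0) (k : ℕ) :
    2 ^ k ∣ (harmonic n).den ↔ 2 ^ k ≤ n := by
  rw [padicValNat_dvd_iff_le (harmonic n).den_nz, padicValNat_two_harmonic_den,
    Nat.le_log_iff_pow_le one_lt_two hn]

theorem setOf_harmonic_den_not_two_pow_dvd (k : ℕ) :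
    {n : ℕ | 0 < n ∧ ¬ 2 ^ k ∣ (harmonic n).den} = Set.Ioo 0 (2 ^ k) := by
  ext n
  simp only [Set.mem_ofPred_eq, Set.mem_Ioo, and_congr_right_iff]
  intro hn
  rw [two_pow_dvd_harmonic_den_iff hn.ne', not_le]

/-- The set of positive integers `n` with `4 ∤ v_n` is `{1, 2, 3}`, the set of positive
integers `n` with `2 ∤ v_n` is `{1}`; in particular `v_n` is even for every `n ≥ 2`. -/
theorem harmonic_den_not_dvd_sets :
    {n : ℕ | 0 < n ∧ ¬ (4 ∣ (harmonic n).den)} = {1, 2, 3} ∧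
      {n : ℕ | 0 < n ∧ ¬ (2 ∣ (harmonic n).den)} = {1} ∧
      ∀ n : ℕ, 2 ≤ n → 2 ∣ (harmonic n).den := by
  have h4 := setOf_harmonic_den_not_two_pow_dvd 2
  have h2 := setOf_harmonic_den_not_two_pow_dvd 1
  norm_num only at h4 h2
  refine ⟨h4.trans ?_, h2.trans ?_, fun n hn => ?_⟩
  · ext n
    simp only [Set.mem_Ioo, Set.mem_insert_iff, Set.mem_singleton_iff]
    omega
  · ext n
    simp only [Set.mem_Ioo, Set.mem_singleton_iff]
    omega
  · simpa using (two_pow_dvd_harmonic_den_iff (by omega) 1).mpr (by omega)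
end
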